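/- Let G_l, G_m be fully supported probability distributions on a finite set X and E > 0. For the acceptance region B_l^N = { x ∈ X^N : D(Q_x‖G_l) ≤ E }, one has G_m^N(B_l^N) ≤ (N+1)^{|X|} · exp(-N · inf{ D(Q‖G_m) : Q a distribution with D(Q‖G_l) ≤ E }). -/

import Mathlib

/-- The empirical distribution (type) of a sequence `x : Fin N → X`. -/
noncomputable def empDist {X : Type*} [Fintype X] [DecidableEq X] {N : ℕ}
    (x : Fin N → X) : X → ℝ :=
  fun a => ((Finset.univ.filter (fun n => x n = a)).card : ℝ) / N

/-- Kullback–Leibler divergence of `Q` from `G` on a finite set. -/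
noncomputable def dKL {X : Type*} [Fintype X] (Q G : X → ℝ) : ℝ :=
  ∑ a, Q a * Real.log (Q a / G a)

/-- `G` is a probability distribution on a finite set. -/
def IsProb {X : Type*} [Fintype X] (G : X → ℝ) : Prop :=
  (∀ a, 0 ≤ G a) ∧ ∑ a, G a = 1

/-!
Method of types. A sequence `x` of type `Q = Q_x` has probability
`G^N(x) = exp(-N D(Q‖G)) · Q^N(x)`, so each type class has `G^N`-probability at most
`exp(-N D(Q‖G))`. Every type in the acceptance region has `D(Q‖G_m)` at least the infimum,
and there are at most `(N+1)^|X|` types.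
-/

open Finset Real InformationTheory

section

variable {X : Type*} [Fintype X]

lemma dKL_nonneg {Q G : X → ℝ} (hQ : ∀ a, 0 ≤ Q a) (hG : ∀ a, 0 < G a)
    (hsum : ∑ a, G a ≤ ∑ a, Q a) : 0 ≤ dKL Q G := by
  have hkl : ∀ a, Q a * log (Q a / G a) = G a * klFun (Q a / G a) + (Q a - G a) := fun a => by
    rw [klFun_apply]
    field_simp [(hG a).ne']
    ring
  have hpos : 0 ≤ ∑ a, G a * klFun (Q a / G a) :=
    sum_nonneg fun a _ => mul_nonneg (hG a).le (klFun_nonneg (div_nonneg (hQ a) (hG a).le))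
  rw [dKL, Fintype.sum_congr _ _ hkl, sum_add_distrib, sum_sub_distrib]
  linarith

lemma sum_prod_le_one {N : ℕ} {Q : X → ℝ} (hQ : IsProb Q) (s : Finset (Fin N → X)) :
    ∑ x ∈ s, ∏ n, Q (x n) ≤ 1 :=
  calc ∑ x ∈ s, ∏ n, Q (x n)
      ≤ ∑ x : Fin N → X, ∏ n, Q (x n) :=
        sum_le_sum_of_subset_of_nonneg (subset_univ s) fun x _ _ => prod_nonneg fun n _ => hQ.1 _
    _ = 1 := by rw [← Fintype.sum_pow, hQ.2, one_pow]

variable [DecidableEq X] {N : ℕ}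

lemma natCast_mul_empDist (x : Fin N → X) (a : X) :
    (N : ℝ) * empDist x a = #{n | x n = a} := by
  rcases N.eq_zero_or_pos with rfl | hN
  · simp
  · exact mul_div_cancel₀ _ (by positivity)

lemma sum_comp_eq_mul_sum_empDist (x : Fin N → X) (f : X → ℝ) :
    ∑ n, f (x n) = N * ∑ a, empDist x a * f a := by
  rw [← sum_fiberwise' univ x f, mul_sum]
  refine Fintype.sum_congr _ _ fun a => ?_
  rw [sum_const, nsmul_eq_mul, ← mul_assoc, natCast_mul_empDist]

lemma isProb_empDist (hN : 0 < N) (x : Fin N → X) : IsProb (empDist x) := by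
  refine ⟨fun a => by unfold empDist; positivity,
    mul_left_cancel₀ (Nat.cast_ne_zero.2 hN.ne') ?_⟩
  simpa using (sum_comp_eq_mul_sum_empDist x 1).symm

lemma empDist_apply_pos (x : Fin N → X) (n : Fin N) : 0 < empDist x (x n) :=
  div_pos (Nat.cast_pos.2 (card_pos.2 ⟨n, by simp⟩)) (Nat.cast_pos.2 n.pos)

lemma prod_eq_exp_neg_mul_dKL_mul_prod_empDist {G : X → ℝ} (hG : ∀ a, 0 < G a)
    (x : Fin N → X) :
    ∏ n, G (x n) = exp (-(N * dKL (empDist x) G)) * ∏ n, empDist x (x n) := by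
  set Q := empDist x
  have hlog : ∑ n, log (G (x n) / Q (x n)) = -(N * dKL Q G) := by
    rw [sum_comp_eq_mul_sum_empDist x fun a => log (G a / Q a), dKL, ← mul_neg,
      ← sum_neg_distrib]
    congr 1
    refine Fintype.sum_congr _ _ fun a => ?_
    rw [← inv_div, log_inv, mul_neg]
  calc ∏ n, G (x n)
      = ∏ n, exp (log (G (x n) / Q (x n))) * Q (x n) := Fintype.prod_congr _ _ fun n => by
        rw [exp_log (div_pos (hG _) (empDist_apply_pos x n)),
          div_mul_cancel₀ _ (empDist_apply_pos x n).ne']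
    _ = exp (-(N * dKL Q G)) * ∏ n, Q (x n) := by rw [prod_mul_distrib, ← exp_sum, hlog]

lemma sum_prod_le_exp_of_empDist_eq {G Q : X → ℝ} (hG : ∀ a, 0 < G a) (hQ : IsProb Q)
    (s : Finset (Fin N → X)) (hs : ∀ x ∈ s, empDist x = Q) :
    ∑ x ∈ s, ∏ n, G (x n) ≤ exp (-(N * dKL Q G)) :=
  calc ∑ x ∈ s, ∏ n, G (x n)
      = exp (-(N * dKL Q G)) * ∑ x ∈ s, ∏ n, Q (x n) := by
        rw [mul_sum]
        refine sum_congr rfl fun x hx => ?_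
        rw [prod_eq_exp_neg_mul_dKL_mul_prod_empDist hG x, hs x hx]
    _ ≤ exp (-(N * dKL Q G)) := mul_le_of_le_one_right (exp_nonneg _) (sum_prod_le_one hQ s)

lemma card_image_empDist_le [DecidableEq (X → ℝ)] (s : Finset (Fin N → X)) :
    #(s.image empDist) ≤ (N + 1) ^ Fintype.card X := by
  have hsub :
      s.image empDist ⊆ univ.image fun k : X → Fin (N + 1) => fun a => (k a : ℝ) / N := by
    intro Q hQ
    obtain ⟨x, -, rfl⟩ := mem_image.1 hQ
    refine mem_image.2 ⟨fun a => ⟨#{n | x n = a}, Nat.lt_succ_of_le ?_⟩, mem_univ _, rfl⟩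
    exact (card_filter_le _ _).trans (card_fin N).le
  calc #(s.image empDist) ≤ #(univ : Finset (X → Fin (N + 1))) :=
        (card_le_card hsub).trans card_image_le
    _ = (N + 1) ^ Fintype.card X := by simp

lemma sum_prod_le_of_le_dKL (hN : 0 < N) {G : X → ℝ} (hG : ∀ a, 0 < G a)
    (s : Finset (Fin N → X)) (I : ℝ) (hI : ∀ x ∈ s, I ≤ dKL (empDist x) G) :
    ∑ x ∈ s, ∏ n, G (x n) ≤ ((N : ℝ) + 1) ^ Fintype.card X * exp (-(N * I)) := by
  classical
  have hfiber : ∀ Q ∈ s.image empDist,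
      ∑ x ∈ s with empDist x = Q, ∏ n, G (x n) ≤ exp (-(N * I)) := by
    intro Q hQ
    obtain ⟨x₀, hx₀, rfl⟩ := mem_image.1 hQ
    refine (sum_prod_le_exp_of_empDist_eq hG (isProb_empDist hN x₀) _
      fun x hx => (mem_filter.1 hx).2).trans (exp_le_exp.2 (neg_le_neg ?_))
    exact mul_le_mul_of_nonneg_left (hI x₀ hx₀) N.cast_nonneg
  calc ∑ x ∈ s, ∏ n, G (x n)
      = ∑ Q ∈ s.image empDist, ∑ x ∈ s with empDist x = Q, ∏ n, G (x n) :=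
        (sum_fiberwise_of_maps_to (fun x hx => mem_image_of_mem _ hx) _).symm
    _ ≤ #(s.image empDist) * exp (-(N * I)) := by
        rw [← nsmul_eq_mul, ← sum_const]
        exact sum_le_sum hfiber
    _ ≤ ((N : ℝ) + 1) ^ Fintype.card X * exp (-(N * I)) := by
        gcongr
        exact_mod_cast card_image_empDist_le s

end

theorem acceptance_prob_upper_general (X : Type*) [Fintype X] [DecidableEq X]
    (N : ℕ) (hN : 0 < N)
    (Gl Gm : X → ℝ)
    (hGm : IsProb Gm) (hGmpos : ∀ a, 0 < Gm a) (E : ℝ) :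
    ∑ x ∈ Finset.univ.filter (fun x : Fin N → X => dKL (empDist x) Gl ≤ E),
        ∏ n, Gm (x n)
      ≤ ((N : ℝ) + 1) ^ Fintype.card X *
        Real.exp (-(N * sInf {d : ℝ | ∃ Q : X → ℝ, IsProb Q ∧ dKL Q Gl ≤ E ∧ d = dKL Q Gm})) := by
  refine sum_prod_le_of_le_dKL hN hGmpos _ _ fun x hx =>
    csInf_le ⟨0, ?_⟩ ⟨empDist x, isProb_empDist hN x, (mem_filter.1 hx).2, rfl⟩
  rintro _ ⟨Q, hQ, -, rfl⟩
  exact dKL_nonneg hQ.1 hGmpos (by rw [hGm.2, hQ.2])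

/-- Upper bound on the probability under `G_m^N` of the acceptance region
`B_l^N = {x : D(Q_x‖G_l) ≤ E}` in terms of the constrained infimum of
divergence. -/
theorem acceptance_prob_upper (X : Type*) [Fintype X] [DecidableEq X]
    (N : ℕ) (hN : 0 < N)
    (Gl Gm : X → ℝ) (hGl : IsProb Gl) (hGlpos : ∀ a, 0 < Gl a)
    (hGm : IsProb Gm) (hGmpos : ∀ a, 0 < Gm a) (E : ℝ) (hE : 0 < E) :
    ∑ x ∈ Finset.univ.filter (fun x : Fin N → X => dKL (empDist x) Gl ≤ E),
        ∏ n, Gm (x n)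
      ≤ ((N : ℝ) + 1) ^ Fintype.card X *
        Real.exp (-(N * sInf {d : ℝ | ∃ Q : X → ℝ, IsProb Q ∧ dKL Q Gl ≤ E ∧ d = dKL Q Gm})) :=
  acceptance_prob_upper_general X N hN Gl Gm hGm hGmpos E
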